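/- Define Φ_{N,j}^±(x) := F⁻¹[φ̂_j(ξ ∓ 2^N e_1)](x − 2^{2N+|j|} e_1). For every m ∈ ℕ and 0 < δ < 1 there exists C > 0 such that for every integer N ≥ 2 and all integers j ≠ k with −δN ≤ j, k ≤ 0: ∫_{ℝ³} (|Φ_{N,j}^+| + |Φ_{N,j}^-|)² (|Φ_{N,k}^+| + |Φ_{N,k}^-|) dx ≤ C 2^{6j+3k} 2^{−mN}. -/

import Mathlib

noncomputable section

open MeasureTheory Real Filter
open scoped FourierTransform ENNReal BigOperators

abbrev Eu (d : ℕ) : Type := EuclideanSpace ℝ (Fin d)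

namespace Paper

/-- The first standard basis vector of `ℝ^d`. -/
def e1 (d : ℕ) : Eu d := (WithLp.equiv 2 (Fin d → ℝ)).symm fun i => if (i : ℕ) = 0 then 1 else 0

/-- The first coordinate of a point of `ℝ^d`. -/
def x1 {d : ℕ} (x : Eu d) : ℝ := (inner ℝ x (e1 d) : ℝ)

/-- Convolution of two complex valued functions on `ℝ^d`. -/
def conv {d : ℕ} (f g : Eu d → ℂ) : Eu d → ℂ := fun x => ∫ y, f y * g (x - y)

/-- Partial derivative in the `i`-th coordinate direction. -/
def pd {d : ℕ} (i : Fin d) (f : Eu d → ℂ) : Eu d → ℂ :=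
  fun x => fderiv ℝ f x (EuclideanSpace.single i 1)

/-- Real-valued version of `pd`. -/
def pdR {d : ℕ} (i : Fin d) (f : Eu d → ℝ) : Eu d → ℝ :=
  fun x => fderiv ℝ f x (EuclideanSpace.single i 1)

/-- Littlewood-Paley dilation `φ_j (x) = 2^{dj} φ_0 (2^j x)`. -/
def LP {d : ℕ} (φ0 : Eu d → ℂ) (j : ℤ) : Eu d → ℂ :=
  fun x => (((2 : ℝ) ^ ((d : ℤ) * j) : ℝ) : ℂ) * φ0 (((2 : ℝ) ^ j) • x)

/-- The homogeneous Besov norm `‖f‖_{Ḃ^s_{p,1}}` (third index `q = 1`). -/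
def besov {d : ℕ} (φ0 : Eu d → ℂ) (s : ℝ) (p : ℝ≥0∞) (f : Eu d → ℂ) : ℝ≥0∞ :=
  ∑' j : ℤ, ENNReal.ofReal ((2 : ℝ) ^ (s * (j : ℝ))) * eLpNorm (conv (LP φ0 j) f) p volume

/-- Besov norm of a real-valued function. -/
def besovR {d : ℕ} (φ0 : Eu d → ℂ) (s : ℝ) (p : ℝ≥0∞) (f : Eu d → ℝ) : ℝ≥0∞ :=
  besov φ0 s p (fun x => (f x : ℂ))

/-- The set of integers `j` with `-δN ≤ j ≤ 0`. -/
def jSet (δ : ℝ) (N : ℕ) : Finset ℤ := Finset.Icc ⌈-(δ * (N : ℝ))⌉ 0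

/-- The translation `2^{|j|+2N} e_1`. -/
def shift (d : ℕ) (N : ℕ) (j : ℤ) : Eu d := ((2 : ℝ) ^ (j.natAbs + 2 * N) : ℝ) • e1 d

/-- `R = (log N)⁻¹`. -/
def RN (N : ℕ) : ℝ := (Real.log N)⁻¹

/-- First component of the initial datum `u_{0,N}` (in dimension `d`). -/
def u0c (d : ℕ) (φ0 : Eu d → ℂ) (δ : ℝ) (N : ℕ) : Eu d → ℂ := fun x =>
  ((RN N * (N : ℝ) ^ (-(1 : ℝ) / (d : ℝ)) * Real.sin ((2 : ℝ) ^ N * x1 x) : ℝ) : ℂ) *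
    ∑ j ∈ jSet δ N, (((2 : ℝ) ^ (-((d : ℤ) - 1) * j) : ℝ) : ℂ) * LP φ0 j (x - shift d N j)

/-- The initial velocity field `u_{0,N}`. -/
def u0v (d : ℕ) (φ0 : Eu d → ℂ) (δ : ℝ) (N : ℕ) : Fin d → Eu d → ℂ :=
  fun l x => if (l : ℕ) = 0 then u0c d φ0 δ N x else 0

/-- Heat semigroup `e^{tΔ}` given by convolution with the Gaussian kernel. -/
def heat {d : ℕ} (t : ℝ) (f : Eu d → ℂ) : Eu d → ℂ :=
  if t = 0 then f else fun x =>
    ∫ y, (((4 * Real.pi * t) ^ (-(d : ℝ) / 2) * Real.exp (-‖x - y‖ ^ 2 / (4 * t)) : ℝ) : ℂ) * f y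

/-- Divergence of a vector field. -/
def divg {d : ℕ} (u : Fin d → Eu d → ℂ) : Eu d → ℂ := fun x => ∑ j, pd j (u j) x

/-- Real divergence. -/
def divgR {d : ℕ} (u : Fin d → Eu d → ℝ) : Eu d → ℝ := fun x => ∑ j, pdR j (u j) x

/-- The lattice point `k ∈ ℤ³` seen inside `ℝ³`. -/
def kv (k : Fin 3 → ℤ) : Eu 3 := (WithLp.equiv 2 (Fin 3 → ℝ)).symm fun i => (k i : ℝ)

/-- The modulation space norm `‖f‖_{M_{3,1}}`. -/
def modNorm (χ : Eu 3 → ℂ) (f : Eu 3 → ℂ) : ℝ≥0∞ :=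
  ∑' k : Fin 3 → ℤ, eLpNorm (𝓕⁻ fun ξ => χ (ξ - kv k) * 𝓕 f ξ) 3 volume

/-- Modulation norm of a vector field: sum over the components. -/
def modNormV (χ : Eu 3 → ℂ) (u : Fin 3 → Eu 3 → ℂ) : ℝ≥0∞ := ∑ i, modNorm χ (u i)

/-- The hypotheses on the window function `χ` defining the modulation norm. -/
structure IsChi (χ : Eu 3 → ℂ) : Prop where
  smooth : ContDiff ℝ (⊤ : ℕ∞) χ
  compact : HasCompactSupport χ
  supp : Function.support χ ⊆ {ξ : Eu 3 | ∀ i : Fin 3, 0 ≤ ξ i ∧ ξ i < 2}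
  sum : ∀ ξ : Eu 3, HasSum (fun k : Fin 3 → ℤ => χ (ξ - kv k)) 1

/-- The semigroup `e^{t𝓛}`, `𝓛 = μΔ + (μ+λ)∇div`, defined on the Fourier side. -/
def Lsemi (μ lam t : ℝ) (u : Fin 3 → Eu 3 → ℂ) : Fin 3 → Eu 3 → ℂ := fun i =>
  𝓕⁻ fun ξ =>
    ((Real.exp (-(t * μ * ‖ξ‖ ^ 2)) : ℝ) : ℂ) *
        (𝓕 (u i) ξ - ((‖ξ‖ ^ 2 : ℝ) : ℂ)⁻¹ * ((ξ i : ℝ) : ℂ) * ∑ j, ((ξ j : ℝ) : ℂ) * 𝓕 (u j) ξ) +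
      ((Real.exp (-(t * (2 * μ + lam) * ‖ξ‖ ^ 2)) : ℝ) : ℂ) * ((‖ξ‖ ^ 2 : ℝ) : ℂ)⁻¹ *
        ((ξ i : ℝ) : ℂ) * ∑ j, ((ξ j : ℝ) : ℂ) * 𝓕 (u j) ξ

/-- The operator `𝓛 = μΔ + (μ+λ)∇div`. -/
def Lop (μ lam : ℝ) (u : Fin 3 → Eu 3 → ℂ) : Fin 3 → Eu 3 → ℂ := fun i x =>
  (μ : ℂ) * ∑ j, pd j (pd j (u i)) x + ((μ + lam : ℝ) : ℂ) * pd i (divg u) x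

/-- Real-valued version of `𝓛`. -/
def LopR (μ lam : ℝ) (u : Fin 3 → Eu 3 → ℝ) : Fin 3 → Eu 3 → ℝ := fun i x =>
  μ * ∑ j, pdR j (pdR j (u i)) x + (μ + lam) * pdR i (divgR u) x

/-- The heat semigroup `e^{tκΔ}` on the Fourier side. -/
def heatF (κ t : ℝ) (f : Eu 3 → ℂ) : Eu 3 → ℂ :=
  𝓕⁻ fun ξ => ((Real.exp (-(κ * t * ‖ξ‖ ^ 2)) : ℝ) : ℂ) * 𝓕 f ξ

/-- `(u·∇)v`. -/
def advect (u v : Fin 3 → Eu 3 → ℂ) : Fin 3 → Eu 3 → ℂ := fun i x => ∑ j, u j x * pd j (v i) x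

/-- Deformation tensor `D(u)_{ij}`. -/
def Dten (u : Fin 3 → Eu 3 → ℂ) (i j : Fin 3) : Eu 3 → ℂ := fun x =>
  (pd i (u j) x + pd j (u i) x) / 2

/-- The quadratic form `2μ tr(D(u)D(v)ᵀ) + λ div u · div v`. -/
def DD (μ lam : ℝ) (u v : Fin 3 → Eu 3 → ℂ) : Eu 3 → ℂ := fun x =>
  2 * (μ : ℂ) * ∑ i, ∑ j, Dten u i j x * Dten v i j x + (lam : ℂ) * divg u x * divg v x

end Paper
namespace Paper

/-- The first Picard iterate `U_1(t) = e^{t𝓛} u_0`. -/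
def U1 (μ lam : ℝ) (u0 : Fin 3 → Eu 3 → ℂ) (t : ℝ) : Fin 3 → Eu 3 → ℂ := Lsemi μ lam t u0

/-- The first Picard iterate `P_1(t) = -∫_0^t div U_1(s) ds`. -/
def P1 (μ lam : ℝ) (u0 : Fin 3 → Eu 3 → ℂ) (t : ℝ) : Eu 3 → ℂ := fun x =>
  -∫ s in (0 : ℝ)..t, divg (U1 μ lam u0 s) x

/-- The second Picard iterate `Θ_2`. -/
def Θ2 (μ lam κ : ℝ) (u0 : Fin 3 → Eu 3 → ℂ) (t : ℝ) : Eu 3 → ℂ := fun x =>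
  ∫ s in (0 : ℝ)..t, heatF κ (t - s) (DD μ lam (U1 μ lam u0 s) (U1 μ lam u0 s)) x

/-- The second Picard iterate `U_2`. -/
def U2 (μ lam κ : ℝ) (u0 : Fin 3 → Eu 3 → ℂ) (t : ℝ) : Fin 3 → Eu 3 → ℂ := fun i x =>
  ∫ s in (0 : ℝ)..t,
    Lsemi μ lam (t - s)
      (fun i' y =>
        -advect (U1 μ lam u0 s) (U1 μ lam u0 s) i' y - pd i' (Θ2 μ lam κ u0 s) y -
          P1 μ lam u0 s y * deriv (fun τ => U1 μ lam u0 τ i' y) s) i x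

/-- The second Picard iterate `P_2`. -/
def P2 (μ lam κ : ℝ) (u0 : Fin 3 → Eu 3 → ℂ) (t : ℝ) : Eu 3 → ℂ := fun x =>
  -∫ s in (0 : ℝ)..t,
    (divg (U2 μ lam κ u0 s) x + divg (fun j y => P1 μ lam u0 s y * U1 μ lam u0 s j y) x)

/-- The Picard expansion `(P_k, U_k, Θ_k)_{k ≥ 0}` associated with the data `(0, u_0, 0)`. -/
structure IsPicard (μ lam κ : ℝ) (u0 : Fin 3 → Eu 3 → ℂ) (P : ℕ → ℝ → Eu 3 → ℂ)
    (U : ℕ → ℝ → Fin 3 → Eu 3 → ℂ) (Θ : ℕ → ℝ → Eu 3 → ℂ) : Prop where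
  hP0 : ∀ t, P 0 t = 0
  hU0 : ∀ t, U 0 t = 0
  hΘ0 : ∀ t, Θ 0 t = 0
  hΘ1 : ∀ t, Θ 1 t = 0
  hU1 : ∀ t, U 1 t = U1 μ lam u0 t
  hP1 : ∀ t, P 1 t = P1 μ lam u0 t
  hΘ2 : ∀ t, Θ 2 t = Θ2 μ lam κ u0 t
  hU2 : ∀ t, U 2 t = U2 μ lam κ u0 t
  hP2 : ∀ t, P 2 t = P2 μ lam κ u0 t
  hPk : ∀ k, 3 ≤ k → ∀ t x, P k t x =
    -∫ s in (0 : ℝ)..t,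
      (divg (U k s) x +
        ∑ k1 ∈ Finset.Ioo 0 k, divg (fun j y => P k1 s y * U (k - k1) s j y) x)
  hUk : ∀ k, 3 ≤ k → ∀ t i x, U k t i x =
    ∫ s in (0 : ℝ)..t,
      Lsemi μ lam (t - s)
        (fun i' y =>
          -(∑ k1 ∈ Finset.Ioo 0 k, advect (U k1 s) (U (k - k1) s) i' y) -
            (∑ k1 ∈ Finset.Ioo 0 k, ∑ k2 ∈ Finset.Ioo 0 (k - k1),
              P (k - k1 - k2) s y * advect (U k1 s) (U k2 s) i' y) -
            pd i' (fun z => Θ k s z + ∑ k1 ∈ Finset.Ioo 0 k, P k1 s z * Θ (k - k1) s z) y -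
            ∑ k1 ∈ Finset.Ioo 0 k, P k1 s y * deriv (fun τ => U (k - k1) τ i' y) s) i x
  hΘk : ∀ k, 3 ≤ k → ∀ t x, Θ k t x =
    ∫ s in (0 : ℝ)..t,
      heatF κ (t - s)
        (fun y =>
          -(∑ k1 ∈ Finset.Ioo 0 k, ∑ j, U k1 s j y * pd j (Θ (k - k1) s) y) -
            (∑ k1 ∈ Finset.Ioo 0 k, ∑ k2 ∈ Finset.Ioo 0 (k - k1),
              P (k - k1 - k2) s y * ∑ j, U k1 s j y * pd j (Θ k2 s) y) -
            (∑ k1 ∈ Finset.Ioo 0 k, Θ k1 s y * divg (U (k - k1) s) y) -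
            (∑ k1 ∈ Finset.Ioo 0 k, ∑ k2 ∈ Finset.Ioo 0 (k - k1),
              P (k - k1 - k2) s y * Θ k1 s y * divg (U k2 s) y) -
            (∑ k1 ∈ Finset.Ioo 0 k, P k1 s y * deriv (fun τ => Θ (k - k1) τ y) s) +
            ∑ k1 ∈ Finset.Ioo 0 k, DD μ lam (U k1 s) (U (k - k1) s) y) x

end Paper

namespace Paper

/-- `Φ_{N,j}^+ (x) = F⁻¹[φ̂_j(ξ - 2^N e₁)](x - 2^{2N+|j|} e₁)`. -/
def PhiP (φ0 : Eu 3 → ℂ) (N : ℕ) (j : ℤ) : Eu 3 → ℂ := fun x =>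
  𝓕⁻ (fun ξ => 𝓕 (LP φ0 j) (ξ - (2 : ℝ) ^ N • e1 3))
    (x - (2 : ℝ) ^ (2 * N + j.natAbs) • e1 3)

/-- `Φ_{N,j}^- (x) = F⁻¹[φ̂_j(ξ + 2^N e₁)](x - 2^{2N+|j|} e₁)`. -/
def PhiM (φ0 : Eu 3 → ℂ) (N : ℕ) (j : ℤ) : Eu 3 → ℂ := fun x =>
  𝓕⁻ (fun ξ => 𝓕 (LP φ0 j) (ξ + (2 : ℝ) ^ N • e1 3))
    (x - (2 : ℝ) ^ (2 * N + j.natAbs) • e1 3)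

open scoped RealInnerProductSpace

lemma e1_eq : e1 3 = EuclideanSpace.single (0 : Fin 3) 1 := by
  ext i
  fin_cases i <;> simp [e1]

lemma norm_e1 : ‖e1 3‖ = 1 := by
  rw [e1_eq, EuclideanSpace.norm_single]; norm_num

variable (φ0 : SchwartzMap (Eu 3) ℂ) (j : ℤ)

lemma norm_LP (x : Eu 3) :
    ‖LP (⇑φ0) j x‖ = (2 : ℝ) ^ ((3:ℤ) * j) * ‖φ0 (((2:ℝ) ^ j) • x)‖ := by
  have h : (0:ℝ) < (2:ℝ) ^ ((3:ℤ) * j) := by positivity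
  simp only [LP]
  rw [norm_mul, Complex.norm_real]
  norm_num [abs_of_pos h]

lemma LP_integrable : Integrable (LP (⇑φ0) j) := by
  have h2 : ((2:ℝ) ^ j) ≠ 0 := by positivity
  have := (integrable_comp_smul_iff volume (⇑φ0) h2).mpr φ0.integrable
  exact this.const_mul _

lemma LP_continuous : Continuous (LP (⇑φ0) j) :=
  continuous_const.mul (φ0.continuous.comp (continuous_const_smul _))

lemma fourier_LP (ξ : Eu 3) :
    𝓕 (LP (⇑φ0) j) ξ = 𝓕 (⇑φ0) (((2:ℝ) ^ j)⁻¹ • ξ) := by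
  have h2 : (0:ℝ) < (2:ℝ) ^ j := by positivity
  rw [Real.fourier_eq, Real.fourier_eq]
  have step1 : ∫ v : Eu 3, 𝐞 (-⟪v, ξ⟫) • LP (⇑φ0) j v
      = (((2 : ℝ) ^ ((3:ℤ) * j) : ℝ) : ℂ) • ∫ v : Eu 3, 𝐞 (-⟪v, ξ⟫) • φ0 (((2:ℝ) ^ j) • v) := by
    rw [← integral_smul]
    congr 1; ext v
    show 𝐞 (-⟪v, ξ⟫) • ((((2:ℝ) ^ ((3:ℤ)*j) : ℝ):ℂ) • φ0 (((2:ℝ) ^ j) • v)) = _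
    rw [smul_comm]
  have h3 : ((2:ℝ) ^ j) ^ (3:ℕ) = (2:ℝ) ^ ((3:ℤ) * j) := by
    rw [← zpow_natCast ((2:ℝ)^j) 3, ← zpow_mul]
    norm_num [mul_comm]
  have step2 : ∫ v : Eu 3, 𝐞 (-⟪v, ξ⟫) • φ0 (((2:ℝ)^j) • v)
      = |(((2:ℝ)^j) ^ (3:ℕ))⁻¹| • ∫ y : Eu 3, 𝐞 (-⟪y, ((2:ℝ)^j)⁻¹ • ξ⟫) • φ0 y := by
    have := MeasureTheory.Measure.integral_comp_smul (volume : Measure (Eu 3))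
      (fun y => 𝐞 (-⟪y, ((2:ℝ)^j)⁻¹ • ξ⟫) • φ0 y) ((2:ℝ)^j)
    simp only [finrank_euclideanSpace_fin] at this
    rw [← this]
    congr 1; ext v
    have hinner : (inner ℝ (((2:ℝ)^j) • v) (((2:ℝ)^j)⁻¹ • ξ) : ℝ) = inner ℝ v ξ := by
      rw [real_inner_smul_left, real_inner_smul_right]
      field_simp
    rw [hinner]
  rw [step1, step2, Complex.real_smul, smul_eq_mul, ← mul_assoc, ← Complex.ofReal_mul]
  have hone : (2:ℝ) ^ ((3:ℤ)*j) * |(((2:ℝ)^j) ^ (3:ℕ))⁻¹| = 1 := by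
    rw [h3, abs_of_pos (by positivity), mul_inv_cancel₀ (by positivity)]
  rw [hone]
  simp

lemma fourier_LP_integrable : Integrable (𝓕 (LP (⇑φ0) j)) := by
  have h2 : (((2:ℝ) ^ j)⁻¹) ≠ 0 := by positivity
  have hF : Integrable (𝓕 (⇑φ0)) := by
    exact (𝓕 φ0 : SchwartzMap (Eu 3) ℂ).integrable
  have := (integrable_comp_smul_iff volume (𝓕 (⇑φ0)) h2).mpr hF
  exact this.congr (Filter.EventuallyEq.of_eq (funext fun ξ => (fourier_LP φ0 j ξ).symm))

lemma inv_four_shift_norm (b : Eu 3) (y : Eu 3) :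
    ‖𝓕⁻ (fun ξ => 𝓕 (LP (⇑φ0) j) (ξ - b)) y‖ = ‖LP (⇑φ0) j y‖ := by
  set f := LP (⇑φ0) j with hf
  set g : Eu 3 → ℂ := fun x => 𝐞 ⟪x, b⟫ • f x with hg
  have hfg : (fun ξ => 𝓕 f (ξ - b)) = 𝓕 g := by
    ext ξ
    rw [Real.fourier_eq, Real.fourier_eq]
    congr 1; ext v
    rw [hg, smul_smul, ← AddChar.map_add_eq_mul]
    congr 2
    rw [inner_sub_right]
    ring
  have hgi : Integrable g := by
    have := (Real.fourierIntegral_convergent_iff (f := f) (μ := volume) (-b)).mpr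
      (LP_integrable φ0 j)
    refine this.congr (Filter.EventuallyEq.of_eq (funext fun v => ?_))
    rw [inner_neg_right, neg_neg]
  have hFgi : Integrable (𝓕 g) := by
    rw [← hfg]
    exact (fourier_LP_integrable φ0 j).comp_sub_right b
  have hgc : Continuous g := by
    apply Continuous.smul _ (LP_continuous φ0 j)
    exact continuous_induced_dom.comp ((Real.continuous_fourierChar).comp ((continuous_id.inner continuous_const)))
  rw [hfg, hgi.fourierInv_fourier_eq hFgi hgc.continuousAt, hg]
  exact Circle.norm_smul _ _

lemma norm_PhiP (N : ℕ) (x : Eu 3) :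
    ‖PhiP (⇑φ0) N j x‖
      = (2:ℝ) ^ ((3:ℤ) * j) * ‖φ0 ((2:ℝ)^j • (x - (2:ℝ) ^ (2*N + j.natAbs) • e1 3))‖ := by
  rw [PhiP, inv_four_shift_norm, norm_LP]

lemma norm_PhiM (N : ℕ) (x : Eu 3) :
    ‖PhiM (⇑φ0) N j x‖
      = (2:ℝ) ^ ((3:ℤ) * j) * ‖φ0 ((2:ℝ)^j • (x - (2:ℝ) ^ (2*N + j.natAbs) • e1 3))‖ := by
  have h : (fun ξ : Eu 3 => 𝓕 (LP (⇑φ0) j) (ξ + (2:ℝ)^N • e1 3))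
      = fun ξ => 𝓕 (LP (⇑φ0) j) (ξ - (-((2:ℝ)^N • e1 3))) := by
    simp [sub_neg_eq_add]
  rw [PhiM, h, inv_four_shift_norm, norm_LP]

lemma two_pow_sub_abs' {M A B : ℕ} (hA : M ≤ A) (h : A < B) :
    (2:ℝ)^M ≤ |(2:ℝ)^A - (2:ℝ)^B| := by
  have h0 : (2:ℝ)^A ≤ 2^B := pow_le_pow_right₀ one_le_two h.le
  rw [abs_sub_comm, abs_of_nonneg (by linarith)]
  have h1 : (2:ℝ)^(A+1) ≤ 2^B := pow_le_pow_right₀ one_le_two h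
  have h2 : (2:ℝ)^M ≤ 2^A := pow_le_pow_right₀ one_le_two hA
  rw [pow_succ] at h1
  linarith

lemma two_pow_sub_abs {M A B : ℕ} (hA : M ≤ A) (hB : M ≤ B) (hAB : A ≠ B) :
    (2:ℝ)^M ≤ |(2:ℝ)^A - (2:ℝ)^B| := by
  rcases lt_or_gt_of_ne hAB with h | h
  · exact two_pow_sub_abs' hA h
  · rw [abs_sub_comm]
    exact two_pow_sub_abs' hB h

lemma habs3 (l : ℤ) : |(((2:ℝ)^l)^(3:ℕ))⁻¹| = (2:ℝ)^(-(3*l)) := by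
  rw [← zpow_natCast ((2:ℝ)^l) 3, ← zpow_mul, ← zpow_neg, abs_of_pos (by positivity)]
  ring_nf

set_option maxHeartbeats 2000000 in
/-- estimate (3.4)/(110702): almost-orthogonality of the pieces
`Φ_{N,j}^±` for `j ≠ k`. -/
theorem separated_pieces_estimate (φ0 : SchwartzMap (Eu 3) ℂ)
    (hsupp : Function.support (𝓕 ⇑φ0) ⊆ {ξ : Eu 3 | 1 / 2 ≤ ‖ξ‖ ∧ ‖ξ‖ ≤ 2})
    (hsum : ∀ ξ : Eu 3, ξ ≠ 0 → HasSum (fun j : ℤ => 𝓕 (LP (⇑φ0) j) ξ) 1)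
    (m : ℕ) (δ : ℝ) (hδ0 : 0 < δ) (hδ1 : δ < 1) :
    ∃ C : ℝ, 0 < C ∧ ∀ N : ℕ, 2 ≤ N →
      ∀ j k : ℤ, j ≠ k → -(δ * (N : ℝ)) ≤ (j : ℝ) → j ≤ 0 →
        -(δ * (N : ℝ)) ≤ (k : ℝ) → k ≤ 0 →
        (∫ x : Eu 3,
            (‖PhiP (⇑φ0) N j x‖ + ‖PhiM (⇑φ0) N j x‖) ^ 2 *
              (‖PhiP (⇑φ0) N k x‖ + ‖PhiM (⇑φ0) N k x‖)) ≤
          C * (2 : ℝ) ^ (6 * j + 3 * k) * (2 : ℝ) ^ (-((m : ℤ) * (N : ℤ))) := by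
  obtain ⟨Cn, hCnpos, hCn⟩ := φ0.decay (2*m+6) 0
  obtain ⟨C0, hC0pos, hC0⟩ := φ0.decay 0 0
  simp only [norm_iteratedFDeriv_zero] at hCn hC0
  simp only [pow_zero, one_mul] at hC0
  set I₁ := ∫ x : Eu 3, ‖φ0 x‖ with hI₁
  set I₂ := ∫ x : Eu 3, ‖φ0 x‖^2 with hI₂
  have hI₁nonneg : 0 ≤ I₁ := integral_nonneg fun x => norm_nonneg _
  have hI₂nonneg : 0 ≤ I₂ := integral_nonneg fun x => sq_nonneg _
  have hint1 : Integrable (fun x : Eu 3 => ‖φ0 x‖) := φ0.integrable.norm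
  have hint2 : Integrable (fun x : Eu 3 => ‖φ0 x‖^2) := by
    refine Integrable.mono' (hint1.const_mul C0)
      ((φ0.continuous.norm.pow 2).aestronglyMeasurable) ?_
    filter_upwards with x
    rw [Real.norm_eq_abs, abs_of_nonneg (by positivity), pow_two]
    exact mul_le_mul_of_nonneg_right (hC0 x) (norm_nonneg _)
  refine ⟨8 * (Cn * (C0+1)) * (I₂ + I₁) + 1, by positivity, ?_⟩
  intro N hN j k hjk hj1 hj2 hk1 hk2
  have hNR : (0:ℝ) ≤ (N:ℝ) := Nat.cast_nonneg N
  have hδN : δ * N ≤ N := by nlinarith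
  have hjN : -(N:ℤ) ≤ j := by exact_mod_cast (by push_cast; linarith : -(N:ℝ) ≤ (j:ℝ))
  have hkN : -(N:ℤ) ≤ k := by exact_mod_cast (by push_cast; linarith : -(N:ℝ) ≤ (k:ℝ))
  set sj : Eu 3 := (2:ℝ)^(2*N + j.natAbs) • e1 3 with hsj
  set sk : Eu 3 := (2:ℝ)^(2*N + k.natAbs) • e1 3 with hsk
  set Fj : Eu 3 → ℝ := fun x => ‖φ0 ((2:ℝ)^j • (x - sj))‖ with hFjdef
  set Fk : Eu 3 → ℝ := fun x => ‖φ0 ((2:ℝ)^k • (x - sk))‖ with hFkdef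
  have hsep : (2:ℝ)^(2*N) ≤ ‖sj - sk‖ := by
    rw [hsj, hsk, ← sub_smul, norm_smul, norm_e1, mul_one, Real.norm_eq_abs]
    exact two_pow_sub_abs (Nat.le_add_right _ _) (Nat.le_add_right _ _) (by omega)
  set E := (2:ℝ)^(-(((m:ℤ)+3) * N)) with hE
  have hEpos : 0 < E := by positivity
  -- the decay estimate at far points
  have hdecay : ∀ l : ℤ, -(N:ℤ) ≤ l → ∀ v : Eu 3, (2:ℝ)^(2*N)/2 ≤ ‖v‖ →
      ‖φ0 ((2:ℝ)^l • v)‖ ≤ Cn * E := by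
    intro l hl v hv
    have h2l : (0:ℝ) < (2:ℝ)^l := by positivity
    have hpow : (2:ℝ)^(2*(N:ℤ)-1) = (2:ℝ)^(2*N)/2 := by
      rw [zpow_sub₀ (two_ne_zero), zpow_one,
        show (2*(N:ℤ)) = ((2*N : ℕ) : ℤ) by push_cast; ring, zpow_natCast]
    have hy : (2:ℝ)^((N:ℤ)-1) ≤ ‖(2:ℝ)^l • v‖ := by
      rw [norm_smul, Real.norm_eq_abs, abs_of_pos h2l]
      have h1 : (2:ℝ)^(-(N:ℤ)) ≤ (2:ℝ)^l := zpow_le_zpow_right₀ one_le_two hl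
      have h2 : (2:ℝ)^(2*(N:ℤ)-1) ≤ ‖v‖ := le_trans (le_of_eq hpow) hv
      calc (2:ℝ)^((N:ℤ)-1) = (2:ℝ)^(-(N:ℤ)) * (2:ℝ)^(2*(N:ℤ)-1) := by
            rw [← zpow_add₀ (two_ne_zero : (2:ℝ) ≠ 0)]; ring_nf
        _ ≤ (2:ℝ)^l * ‖v‖ := mul_le_mul h1 h2 (by positivity) (by positivity)
    have hypos : (0:ℝ) < ‖(2:ℝ)^l • v‖ := lt_of_lt_of_le (by positivity) hy
    have hyn : (2:ℝ)^(((N:ℤ)-1) * (2*m+6 : ℕ)) ≤ ‖(2:ℝ)^l • v‖^(2*m+6) := by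
      calc (2:ℝ)^(((N:ℤ)-1) * (2*m+6 : ℕ))
          = ((2:ℝ)^((N:ℤ)-1))^(2*m+6 : ℕ) := by
            rw [← zpow_natCast ((2:ℝ)^((N:ℤ)-1)) (2*m+6), ← zpow_mul]
        _ ≤ _ := pow_le_pow_left₀ (by positivity) hy _
    have hb : ‖φ0 ((2:ℝ)^l • v)‖ ≤ Cn / ‖(2:ℝ)^l • v‖^(2*m+6) := by
      rw [le_div_iff₀ (by positivity)]
      calc ‖φ0 ((2:ℝ)^l • v)‖ * ‖(2:ℝ)^l • v‖^(2*m+6)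
          = ‖(2:ℝ)^l • v‖^(2*m+6) * ‖φ0 ((2:ℝ)^l • v)‖ := by ring
        _ ≤ Cn := hCn _
    refine le_trans hb ?_
    rw [div_le_iff₀ (by positivity)]
    calc Cn = Cn * ((2:ℝ)^(((N:ℤ)-1) * (2*m+6 : ℕ)) * (2:ℝ)^(-(((N:ℤ)-1) * (2*m+6 : ℕ)))) := by
          rw [← zpow_add₀ (two_ne_zero : (2:ℝ) ≠ 0)]; simp
      _ ≤ Cn * E * ‖(2:ℝ)^l • v‖^(2*m+6) := by
          have hexp : -(((N:ℤ)-1) * (2*m+6 : ℕ)) ≤ -(((m:ℤ)+3) * N) := by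
            have h2N : (2:ℤ) ≤ (N:ℤ) := by exact_mod_cast hN
            push_cast
            nlinarith
          have h3 : (2:ℝ)^(-(((N:ℤ)-1) * (2*m+6 : ℕ))) ≤ E := zpow_le_zpow_right₀ one_le_two hexp
          calc Cn * ((2:ℝ)^(((N:ℤ)-1) * (2*m+6 : ℕ)) * (2:ℝ)^(-(((N:ℤ)-1) * (2*m+6 : ℕ))))
              ≤ Cn * ((2:ℝ)^(((N:ℤ)-1) * (2*m+6 : ℕ)) * E) := by
                apply mul_le_mul_of_nonneg_left _ hCnpos.le
                exact mul_le_mul_of_nonneg_left h3 (by positivity)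
            _ ≤ Cn * (‖(2:ℝ)^l • v‖^(2*m+6) * E) := by
                apply mul_le_mul_of_nonneg_left _ hCnpos.le
                exact mul_le_mul_of_nonneg_right hyn hEpos.le
            _ = Cn * E * ‖(2:ℝ)^l • v‖^(2*m+6) := by ring
  -- pointwise bound
  have key : ∀ x : Eu 3, Fj x^2 * Fk x ≤ (Cn*(C0+1)) * E * (Fj x^2 + Fk x) := by
    intro x
    have hFjnn : 0 ≤ Fj x := norm_nonneg _
    have hFknn : 0 ≤ Fk x := norm_nonneg _
    have hFjC0 : Fj x ≤ C0 := hC0 _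
    have hFkC0 : Fk x ≤ C0 := hC0 _
    have hsplit : (2:ℝ)^(2*N) ≤ ‖x - sj‖ + ‖x - sk‖ := by
      refine le_trans hsep ?_
      calc ‖sj - sk‖ = ‖(sj - x) + (x - sk)‖ := by rw [sub_add_sub_cancel]
        _ ≤ ‖sj - x‖ + ‖x - sk‖ := norm_add_le _ _
        _ = ‖x - sj‖ + ‖x - sk‖ := by rw [norm_sub_rev]
    rcases le_or_gt ((2:ℝ)^(2*N)/2) ‖x - sj‖ with h | h
    · have hFjsm : Fj x ≤ Cn * E := hdecay j hjN _ h
      calc Fj x^2 * Fk x = (Fj x * Fj x) * Fk x := by ring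
        _ ≤ ((Cn * E) * C0) * Fk x := by
            apply mul_le_mul_of_nonneg_right _ hFknn
            exact mul_le_mul hFjsm hFjC0 hFjnn (by positivity)
        _ ≤ (Cn*(C0+1)) * E * (Fj x^2 + Fk x) := by
            nlinarith [mul_nonneg (mul_nonneg hCnpos.le hEpos.le) hFknn,
              mul_nonneg (mul_nonneg (mul_nonneg hCnpos.le hEpos.le)
                (by linarith : (0:ℝ) ≤ C0 + 1)) (sq_nonneg (Fj x))]
    · have h' : (2:ℝ)^(2*N)/2 ≤ ‖x - sk‖ := by linarith
      have hFksm : Fk x ≤ Cn * E := hdecay k hkN _ h'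
      calc Fj x^2 * Fk x ≤ Fj x^2 * (Cn * E) :=
            mul_le_mul_of_nonneg_left hFksm (sq_nonneg _)
        _ ≤ (Cn*(C0+1)) * E * (Fj x^2 + Fk x) := by
            nlinarith [mul_nonneg (mul_nonneg (mul_nonneg hCnpos.le hEpos.le) hC0pos.le) (sq_nonneg (Fj x)),
              mul_nonneg (mul_nonneg (mul_nonneg hCnpos.le hEpos.le)
                (by linarith : (0:ℝ) ≤ C0 + 1)) hFknn]
  -- integrability
  have h2j : ((2:ℝ)^j) ≠ 0 := by positivity
  have h2k : ((2:ℝ)^k) ≠ 0 := by positivity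
  have hFkint : Integrable Fk :=
    ((integrable_comp_smul_iff volume (fun y : Eu 3 => ‖φ0 y‖) h2k).mpr hint1).comp_sub_right sk
  have hFj2int : Integrable (fun x => Fj x^2) :=
    ((integrable_comp_smul_iff volume (fun y : Eu 3 => ‖φ0 y‖^2) h2j).mpr hint2).comp_sub_right sj
  -- integral values
  have hIFk : ∫ x : Eu 3, Fk x = (2:ℝ)^(-(3*k)) * I₁ := by
    calc ∫ x : Eu 3, Fk x = ∫ x : Eu 3, ‖φ0 ((2:ℝ)^k • x)‖ :=
          integral_sub_right_eq_self (fun y : Eu 3 => ‖φ0 ((2:ℝ)^k • y)‖) sk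
      _ = (2:ℝ)^(-(3*k)) * I₁ := by
          rw [MeasureTheory.Measure.integral_comp_smul volume (fun y : Eu 3 => ‖φ0 y‖) ((2:ℝ)^k)]
          simp only [finrank_euclideanSpace_fin, smul_eq_mul]
          rw [habs3]
  have hIFj2 : ∫ x : Eu 3, Fj x^2 = (2:ℝ)^(-(3*j)) * I₂ := by
    calc ∫ x : Eu 3, Fj x^2 = ∫ x : Eu 3, ‖φ0 ((2:ℝ)^j • x)‖^2 :=
          integral_sub_right_eq_self (fun y : Eu 3 => ‖φ0 ((2:ℝ)^j • y)‖^2) sj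
      _ = (2:ℝ)^(-(3*j)) * I₂ := by
          rw [MeasureTheory.Measure.integral_comp_smul volume (fun y : Eu 3 => ‖φ0 y‖^2) ((2:ℝ)^j)]
          simp only [finrank_euclideanSpace_fin, smul_eq_mul]
          rw [habs3]
  have hbj : (2:ℝ)^(-(3*j)) ≤ (2:ℝ)^(3*(N:ℤ)) := zpow_le_zpow_right₀ one_le_two (by linarith)
  have hbk : (2:ℝ)^(-(3*k)) ≤ (2:ℝ)^(3*(N:ℤ)) := zpow_le_zpow_right₀ one_le_two (by linarith)
  set K := 8 * (2:ℝ)^(6*j+3*k) * ((Cn*(C0+1)) * E) with hK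
  have hKpos : 0 < K := by positivity
  have hFjnn : ∀ x, 0 ≤ Fj x := fun _ => norm_nonneg _
  have hFknn : ∀ x, 0 ≤ Fk x := fun _ => norm_nonneg _
  -- pointwise identity for the integrand
  have hepow : ((2:ℝ)^((3:ℤ)*j))^(2:ℕ) * (2:ℝ)^((3:ℤ)*k) = (2:ℝ)^(6*j+3*k) := by
    rw [← zpow_natCast ((2:ℝ)^((3:ℤ)*j)) 2, ← zpow_mul, ← zpow_add₀ (two_ne_zero : (2:ℝ) ≠ 0)]
    ring_nf
  have hpt : ∀ x : Eu 3,
      (‖PhiP (⇑φ0) N j x‖ + ‖PhiM (⇑φ0) N j x‖) ^ 2 *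
        (‖PhiP (⇑φ0) N k x‖ + ‖PhiM (⇑φ0) N k x‖)
      = 8 * (2:ℝ)^(6*j+3*k) * (Fj x^2 * Fk x) := by
    intro x
    rw [norm_PhiP, norm_PhiM, norm_PhiP, norm_PhiM, ← hsj, ← hsk]
    simp only [hFjdef, hFkdef]
    rw [← hepow]
    ring
  have step1 : (∫ x : Eu 3,
      (‖PhiP (⇑φ0) N j x‖ + ‖PhiM (⇑φ0) N j x‖) ^ 2 *
        (‖PhiP (⇑φ0) N k x‖ + ‖PhiM (⇑φ0) N k x‖))
      = ∫ x : Eu 3, 8 * (2:ℝ)^(6*j+3*k) * (Fj x^2 * Fk x) :=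
    integral_congr_ae (Filter.Eventually.of_forall hpt)
  have step2 : (∫ x : Eu 3, 8 * (2:ℝ)^(6*j+3*k) * (Fj x^2 * Fk x))
      ≤ ∫ x : Eu 3, K * (Fj x^2 + Fk x) := by
    refine integral_mono_of_nonneg
      (Filter.Eventually.of_forall fun x =>
        mul_nonneg (by positivity) (mul_nonneg (sq_nonneg _) (hFknn x)))
      ((hFj2int.add hFkint).const_mul K)
      (Filter.Eventually.of_forall fun x => ?_)
    rw [hK]
    calc 8 * (2:ℝ)^(6*j+3*k) * (Fj x^2 * Fk x)
        ≤ 8 * (2:ℝ)^(6*j+3*k) * ((Cn*(C0+1)) * E * (Fj x^2 + Fk x)) :=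
          mul_le_mul_of_nonneg_left (key x) (by positivity)
      _ = 8 * (2:ℝ)^(6*j+3*k) * ((Cn*(C0+1)) * E) * (Fj x^2 + Fk x) := by ring
  have step3 : (∫ x : Eu 3, K * (Fj x^2 + Fk x))
      = K * ((2:ℝ)^(-(3*j)) * I₂ + (2:ℝ)^(-(3*k)) * I₁) := by
    rw [integral_const_mul, integral_add hFj2int hFkint, hIFj2, hIFk]
  have step4 : K * ((2:ℝ)^(-(3*j)) * I₂ + (2:ℝ)^(-(3*k)) * I₁)
      ≤ K * ((2:ℝ)^(3*(N:ℤ)) * (I₂ + I₁)) := by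
    refine mul_le_mul_of_nonneg_left ?_ hKpos.le
    have b1 := mul_le_mul_of_nonneg_right hbj hI₂nonneg
    have b2 := mul_le_mul_of_nonneg_right hbk hI₁nonneg
    nlinarith
  have hE2 : E * (2:ℝ)^(3*(N:ℤ)) = (2:ℝ)^(-((m:ℤ)*(N:ℤ))) := by
    rw [hE, ← zpow_add₀ (two_ne_zero : (2:ℝ) ≠ 0)]
    congr 1
    ring
  have step5 : K * ((2:ℝ)^(3*(N:ℤ)) * (I₂ + I₁))
      = (8 * (Cn*(C0+1)) * (I₂ + I₁)) * (2:ℝ)^(6*j+3*k) * (2:ℝ)^(-((m:ℤ)*(N:ℤ))) := by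
    rw [hK, ← hE2]
    ring
  rw [step1]
  refine le_trans step2 (le_trans (le_of_eq step3) (le_trans step4 (le_trans (le_of_eq step5) ?_)))
  have hp1 : (0:ℝ) ≤ (2:ℝ)^(6*j+3*k) := by positivity
  have hp2 : (0:ℝ) ≤ (2:ℝ)^(-((m:ℤ)*(N:ℤ))) := by positivity
  have : 8 * (Cn*(C0+1)) * (I₂ + I₁) ≤ 8 * (Cn*(C0+1)) * (I₂ + I₁) + 1 := by linarith
  exact mul_le_mul_of_nonneg_right (mul_le_mul_of_nonneg_right this hp1) hp2


end Paper
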